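/- Let G and H be games over L5 such that G has mean C and H has mean D (in the sense of the recursively defined mean predicate). If C ≤ D then G ⊲ H, and if C < D then G ≤ H. -/

import Mathlib

universe u

/-- Combinatorial games over a poset `A` of atoms: either an atomic game `[a]` for an atom
`a : A`, or a composite game `⟨L|R⟩` where `L` and `R` are nonempty families of games
(the left and right options). -/
inductive PoGame (A : Type u) : Type (u + 1) where
  | atom : A → PoGame A
  | mk : (xl xr : Type u) → (xl → PoGame A) → (xr → PoGame A) →
      Nonempty xl → Nonempty xr → PoGame A

namespace SetTheory

/-- Normal-play pre-games (as in the older Mathlib's `SetTheory.PGame`, since removed). -/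
inductive PGame : Type (u + 1)
  | mk : ∀ α β : Type u, (α → PGame) → (β → PGame) → PGame

/-- The pre-game `0 = { | }` (as in the older Mathlib). -/
instance PGame.instZero : Zero PGame :=
  ⟨⟨PEmpty, PEmpty, PEmpty.elim, PEmpty.elim⟩⟩

end SetTheory

namespace PoGame

variable {A : Type u}

/-- `G` is an atomic game. -/
def IsAtomic : PoGame A → Prop
  | atom _ => True
  | mk _ _ _ _ _ _ => False

/-- `G` is a left option of the game given as second argument. -/
def IsLeftOption (G : PoGame A) : PoGame A → Prop
  | atom _ => False
  | mk _ _ L _ _ _ => ∃ i, L i = G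

/-- `G` is a right option of the game given as second argument. -/
def IsRightOption (G : PoGame A) : PoGame A → Prop
  | atom _ => False
  | mk _ _ _ R _ _ => ∃ j, R j = G

section Order

variable [PartialOrder A]

mutual
  /-- `Le G H` is the relation `G ≤ H` on games over the poset `A`, defined by mutual
  recursion with `Lf` (the relation `G ⊲ H`): `G ≤ H` iff every left option `G^L`
  satisfies `G^L ⊲ H`, every right option `H^R` satisfies `G ⊲ H^R`, and if `G` or `H`
  is atomic then `G ⊲ H`. -/
  inductive Le : PoGame A → PoGame A → Prop
    | intro (G H : PoGame A)
        (hL : ∀ G', IsLeftOption G' G → Lf G' H)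
        (hR : ∀ H', IsRightOption H' H → Lf G H')
        (hA : IsAtomic G ∨ IsAtomic H → Lf G H) : Le G H

  /-- `Lf G H` is the relation `G ⊲ H` on games over the poset `A`: it holds iff some
  right option `G^R` satisfies `G^R ≤ H`, or some left option `H^L` satisfies `G ≤ H^L`,
  or `G = [a]` and `H = [b]` are atomic with `a ≤ b` in `A`. -/
  inductive Lf : PoGame A → PoGame A → Prop
    | rightOption (G H G' : PoGame A) (h : IsRightOption G' G) (hle : Le G' H) : Lf G H
    | leftOption (G H H' : PoGame A) (h : IsLeftOption H' H) (hle : Le G H') : Lf G H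
    | atom (a b : A) (hab : a ≤ b) : Lf (atom a) (atom b)
end

/-- Two games are equivalent if `G ≤ H` and `H ≤ G`. -/
def GEquiv (G H : PoGame A) : Prop := Le G H ∧ Le H G

/-- `G` is locally monotone if `G ≤ G^L` for every left option `G^L` and `G^R ≤ G` for
every right option `G^R`. -/
def LocallyMonotone (G : PoGame A) : Prop :=
  (∀ G', IsLeftOption G' G → Le G G') ∧ (∀ G', IsRightOption G' G → Le G' G)

/-- `G` is an option (left or right) of `H`. -/
def IsOption (G H : PoGame A) : Prop := IsLeftOption G H ∨ IsRightOption G H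

/-- `G` is a position of `H`: `H` itself, an option of `H`, an option of an option, etc. -/
def IsPosition (G H : PoGame A) : Prop := Relation.ReflTransGen IsOption G H

/-- `G` is monotone if every position of `G` is locally monotone. -/
def Monotone (G : PoGame A) : Prop := ∀ K, IsPosition K G → LocallyMonotone K

end Order

/-- The 5-element linearly ordered set `L5 = {-3, -2, -1, 0, 1}`. -/
abbrev L5 : Type := {a : ℤ // -3 ≤ a ∧ a ≤ 1}

/-- `G` has mean `C`: an atomic game `[a]` has mean `a`, and a composite game has mean `C`
iff every left option has mean `C + 1` and every right option has mean `C - 1`. -/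
def HasMean : PoGame L5 → ℤ → Prop
  | atom a, C => (a : ℤ) = C
  | mk _ _ L R _ _, C => (∀ i, HasMean (L i) (C + 1)) ∧ (∀ j, HasMean (R j) (C - 1))

/-- The game `⟨G | H⟩` with a single left option `G` and a single right option `H`. -/
def ofPair (G H : PoGame A) : PoGame A :=
  mk PUnit PUnit (fun _ => G) (fun _ => H) ⟨PUnit.unit⟩ ⟨PUnit.unit⟩

/-- `⋆ = ⟨-1 | -3⟩`. -/
def star : PoGame L5 := ofPair (atom ⟨-1, by norm_num⟩) (atom ⟨-3, by norm_num⟩)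

/-- `M(G) = ⟨1 | G⟩`. -/
def M (G : PoGame L5) : PoGame L5 := ofPair (atom ⟨1, by norm_num⟩) G

/-- `P(G) = ⟨G | -2⟩`. -/
def P (G : PoGame L5) : PoGame L5 := ofPair G (atom ⟨-2, by norm_num⟩)

/-- `P⋆(G) = ⟨G | ⋆⟩`. -/
def Pstar (G : PoGame L5) : PoGame L5 := ofPair G star

/-- `Pn n G = P G` if `n` is odd, `P⋆ G` if `n` is even. -/
def Pn (n : ℕ) (G : PoGame L5) : PoGame L5 := if Odd n then P G else Pstar G

/-- The sequence `G_0 = [0]`, `G_{n+1} = M (Pn n (G_n))`. -/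
def Gseq : ℕ → PoGame L5
  | 0 => atom ⟨0, by norm_num⟩
  | n + 1 => M (Pn n (Gseq n))

/-- The normal-play game obtained from a game over `L5` by replacing every atom by the
normal-play game `0 = { | }`, keeping the tree of left and right options. -/
def np : PoGame L5 → SetTheory.PGame.{0}
  | atom _ => 0
  | mk xl xr L R _ _ => SetTheory.PGame.mk xl xr (fun i => np (L i)) (fun j => np (R j))

end PoGame

/-! Induct on both games at once. A move shifts the mean by one in the mover's favour: for
`G ⊲ H`, a composite `G` answers with a right option of mean `C - 1 < D`, a composite `H`
with a left option of mean `D + 1 > C`, and two atoms have values `C ≤ D`; for `G ≤ H`,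
each option shifts one mean by one, which `C < D` absorbs into `C ≤ D`. -/

namespace PoGame

variable {A : Type u}

theorem eq_atom_or_exists_isLeftOption (G : PoGame A) :
    (∃ a, G = atom a) ∨ ∃ G', IsLeftOption G' G := by
  rcases G with a | ⟨_, _, L, _, ⟨i⟩, _⟩
  · exact .inl ⟨a, rfl⟩
  · exact .inr ⟨L i, i, rfl⟩

theorem eq_atom_or_exists_isRightOption (G : PoGame A) :
    (∃ a, G = atom a) ∨ ∃ G', IsRightOption G' G := by
  rcases G with a | ⟨_, _, _, R, _, ⟨j⟩⟩
  · exact .inl ⟨a, rfl⟩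
  · exact .inr ⟨R j, j, rfl⟩

theorem wellFounded_isOption [PartialOrder A] :
    WellFounded (IsOption : PoGame A → PoGame A → Prop) := by
  refine ⟨fun G => ?_⟩
  induction G with
  | atom _ => exact ⟨_, fun _ h => h.elim False.elim False.elim⟩
  | mk _ _ _ _ _ _ ihL ihR =>
    exact ⟨_, by rintro _ (⟨i, rfl⟩ | ⟨j, rfl⟩); exacts [ihL i, ihR j]⟩

theorem HasMean.of_isLeftOption {G G' : PoGame L5} {C : ℤ} (hG : HasMean G C)
    (h : IsLeftOption G' G) : HasMean G' (C + 1) := by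
  rcases G with _ | _
  · exact h.elim
  · obtain ⟨i, rfl⟩ := h
    exact hG.1 i

theorem HasMean.of_isRightOption {G G' : PoGame L5} {C : ℤ} (hG : HasMean G C)
    (h : IsRightOption G' G) : HasMean G' (C - 1) := by
  rcases G with _ | _
  · exact h.elim
  · obtain ⟨j, rfl⟩ := h
    exact hG.2 j

theorem lf_and_le_of_hasMean (G H : PoGame L5) :
    ∀ C D : ℤ, HasMean G C → HasMean H D → (C ≤ D → Lf G H) ∧ (C < D → Le G H) := by
  induction G, H using
    Prod.GameAdd.recursion (wellFounded_isOption (A := L5)) (wellFounded_isOption (A := L5)) with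
  | _ G H ih =>
  intro C D hG hH
  have lf (hCD : C ≤ D) : Lf G H := by
    rcases G.eq_atom_or_exists_isRightOption with ⟨a, rfl⟩ | ⟨G', hG'⟩
    · rcases H.eq_atom_or_exists_isLeftOption with ⟨b, rfl⟩ | ⟨H', hH'⟩
      · exact Lf.atom a b (Subtype.coe_le_coe.1 (hG ▸ hH ▸ hCD))
      · exact Lf.leftOption _ _ H' hH' <| (ih _ _ (.snd (.inl hH')) C (D + 1) hG
          (hH.of_isLeftOption hH')).2 (by omega)
    · exact Lf.rightOption _ _ G' hG' <| (ih _ _ (.fst (.inr hG')) (C - 1) D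
        (hG.of_isRightOption hG') hH).2 (by omega)
  refine ⟨lf, fun hCD => Le.intro G H ?_ ?_ fun _ => lf hCD.le⟩
  · exact fun G' hG' => (ih _ _ (.fst (.inl hG')) (C + 1) D (hG.of_isLeftOption hG') hH).1
      (by omega)
  · exact fun H' hH' => (ih _ _ (.snd (.inr hH')) C (D - 1) hG (hH.of_isRightOption hH')).1
      (by omega)

end PoGame

open PoGame in
/-- If `G` has mean `C` and `H` has mean `D`, then `C ≤ D` implies `G ⊲ H` and `C < D`
implies `G ≤ H`. -/
theorem stmt_0 (G H : PoGame L5) (C D : ℤ) (hG : HasMean G C) (hH : HasMean H D) :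
    (C ≤ D → Lf G H) ∧ (C < D → Le G H) :=
  lf_and_le_of_hasMean G H C D hG hH
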